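/- Let A be a centrohermitian matrix in M(m, m+1) and suppose the variables are restricted to z_0 = z and z_1 = conj(z). If I ⊆ {1,…,m+1} with |I| = m and Ī = {m+2−i : i ∈ I}, then conj(P_I(z, conj z)) = P_{Ī}(z, conj z). -/

import Mathlib

/-- The `n × n` exchange matrix: ones on the anti-diagonal, zeros elsewhere. -/
noncomputable def Jex (n : ℕ) : Matrix (Fin n) (Fin n) ℂ :=
  Matrix.of fun i j => if j = i.rev then 1 else 0

/-- The shifted unit matrix `I_s ∈ M(m, m+1)`, `s = 0` giving `[I_m 0]` and
`s = 1` giving `[0 I_m]`. -/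
noncomputable def shiftI (m : ℕ) (s : ℕ) : Matrix (Fin m) (Fin (m + 1)) ℂ :=
  Matrix.of fun i j => if (j : ℕ) = (i : ℕ) + s then 1 else 0

/-- The generalized characteristic polynomial `P_I(z_0, z_1)` of `A ∈ M(m, m+1)`,
restricted to the conjugate complex variables `z_0 = z`, `z_1 = conj z`:
the determinant of the `m × m` submatrix of `A + z·[I_m 0] + conj z·[0 I_m]`
formed by the columns selected by `cols`. -/
noncomputable def Pgc {m : ℕ} (A : Matrix (Fin m) (Fin (m + 1)) ℂ)
    (cols : Fin m → Fin (m + 1)) (z : ℂ) : ℂ :=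
  ((A + z • shiftI m 0 + (starRingEnd ℂ) z • shiftI m 1).submatrix id cols).det

/-!
Centrohermitian means `conj (A i j) = A i.rev j.rev`. The pencil `A + z·[I_m 0] + conj z·[0 I_m]`
inherits this, since conjugation swaps `z` and `conj z` while the flip `(i, j) ↦ (i.rev, j.rev)`
swaps the two shifted unit matrices. Hence conjugating the column submatrix for `I` yields the
column submatrix for `Ī` with rows and columns both reversed, a simultaneous permutation that
leaves the determinant unchanged.
-/

open Matrix ComplexConjugate

theorem Jex_mul_apply {m : ℕ} {α : Type*} (B : Matrix (Fin m) α ℂ) (i : Fin m) (j : α) :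
    (Jex m * B) i j = B i.rev j := by
  simp [Jex, mul_apply]

theorem mul_Jex_apply {n : ℕ} {α : Type*} (B : Matrix α (Fin n) ℂ) (i : α) (j : Fin n) :
    (B * Jex n) i j = B i j.rev := by
  simp [Jex, mul_apply, ← Fin.rev_eq_iff]

theorem conj_apply_of_eq_Jex_mul_map_mul_Jex {m n : ℕ} {A : Matrix (Fin m) (Fin n) ℂ}
    (hA : A = Jex m * A.map conj * Jex n) (i : Fin m) (j : Fin n) :
    conj (A i j) = A i.rev j.rev := by
  calc conj (A i j) = conj ((Jex m * A.map conj * Jex n) i j) := by rw [← hA]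
    _ = A i.rev j.rev := by rw [mul_Jex_apply, Jex_mul_apply, map_apply, Complex.conj_conj]

theorem shiftI_zero_rev_rev (m : ℕ) (i : Fin m) (j : Fin (m + 1)) :
    shiftI m 0 i.rev j.rev = shiftI m 1 i j := by
  have := i.isLt
  simp only [shiftI, of_apply, Fin.val_rev]
  exact if_congr (by omega) rfl rfl

theorem shiftI_one_rev_rev (m : ℕ) (i : Fin m) (j : Fin (m + 1)) :
    shiftI m 1 i.rev j.rev = shiftI m 0 i j := by
  rw [← shiftI_zero_rev_rev, Fin.rev_rev, Fin.rev_rev]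

theorem conj_pencil_apply {m : ℕ} {A : Matrix (Fin m) (Fin (m + 1)) ℂ}
    (hA : ∀ i j, conj (A i j) = A i.rev j.rev) (z : ℂ) (i : Fin m) (j : Fin (m + 1)) :
    conj ((A + z • shiftI m 0 + conj z • shiftI m 1) i j)
      = (A + z • shiftI m 0 + conj z • shiftI m 1) i.rev j.rev := by
  have hreal : ∀ s, conj (shiftI m s i j) = shiftI m s i j := fun s => by
    simp only [shiftI, of_apply]; split_ifs <;> simp
  simp only [Matrix.add_apply, Matrix.smul_apply, smul_eq_mul, map_add, map_mul,
    Complex.conj_conj, hreal, hA, shiftI_zero_rev_rev, shiftI_one_rev_rev]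
  ring

theorem conj_det_submatrix_of_conj_apply {m n : ℕ} {M : Matrix (Fin m) (Fin n) ℂ}
    (hM : ∀ i j, conj (M i j) = M i.rev j.rev) (cols : Fin m → Fin n) :
    conj (M.submatrix id cols).det = (M.submatrix id fun i => (cols i.rev).rev).det := by
  have hflip : (M.submatrix id cols).map conj
      = (M.submatrix id fun i => (cols i.rev).rev).submatrix Fin.revPerm Fin.revPerm := by
    ext i k
    simp [hM]
  rw [RingHom.map_det, RingHom.mapMatrix_apply, hflip, det_submatrix_equiv_self]

theorem stmt6_general (m : ℕ) (A : Matrix (Fin m) (Fin (m + 1)) ℂ)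
    (hA : A = Jex m * A.map (starRingEnd ℂ) * Jex (m + 1))
    (cols : Fin m → Fin (m + 1)) (z : ℂ) :
    (starRingEnd ℂ) (Pgc A cols z) = Pgc A (fun i => (cols i.rev).rev) z :=
  conj_det_submatrix_of_conj_apply
    (conj_pencil_apply (conj_apply_of_eq_Jex_mul_map_mul_Jex hA) z) cols

/-- For `A ∈ M(m, m+1)` centrohermitian and `I ⊆ {1,…,m+1}` with `|I| = m`,
`conj (P_I(z, conj z)) = P_{Ī}(z, conj z)` where `Ī = {m+2−i : i ∈ I}`
(in 0-indexed form, `i ↦ (cols i.rev).rev`). -/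
theorem stmt6 (m : ℕ) (A : Matrix (Fin m) (Fin (m + 1)) ℂ)
    (hA : A = Jex m * A.map (starRingEnd ℂ) * Jex (m + 1))
    (cols : Fin m → Fin (m + 1)) (hcols : StrictMono cols) (z : ℂ) :
    (starRingEnd ℂ) (Pgc A cols z) = Pgc A (fun i => (cols i.rev).rev) z :=
  stmt6_general m A hA cols z
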